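/- Let K be a field, N ≥ 3 an integer, E and E' finite-dimensional K-vector spaces, and fix n with 1 ≤ n ≤ N-2. Let f : E → E' be a K-linear map. Consider the sequence of vector spaces M_j = E'^⊗j ⊗ E^⊗(n-j) for 0 ≤ j ≤ n (and M_j = 0 otherwise) with maps d_j = id_{E'}^⊗j ⊗ f ⊗ id_E^⊗(n-1-j) : M_j → M_{j+1} for 0 ≤ j ≤ n-1 and zero otherwise. Then this N-complex is acyclic — i.e. for every p ∈ {1, …, N-1} and every index j, the kernel of the composite of p consecutive maps starting at M_j equals the image of the composite of N-p consecutive maps ending at M_j (compositions extending outside the range 0 ≤ j ≤ n being zero) — if and only if E = 0 and E' = 0. -/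

import Mathlib

open TensorProduct

section NComplex

variable (K : Type*) [Field K]

/-- The composite of `q` consecutive maps of a `ℕ`-indexed sequence of linear maps,
starting at position `i`. -/
def compMaps {M : ℕ → Type*} [∀ j, AddCommGroup (M j)] [∀ j, Module K (M j)]
    (d : ∀ j, M j →ₗ[K] M (j + 1)) : ∀ (i q : ℕ), M i →ₗ[K] M (i + q)
  | _, 0 => LinearMap.id
  | i, q + 1 => (d (i + q)).comp (compMaps d i q)

/-- Acyclicity of an `N`-complex `(M_j, d_j)` supported in degrees `0, …, n` (with `M_j = 0`
and zero maps outside this range): for every `p ∈ {1, …, N-1}` and every position `j`, the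
kernel of the composite of `p` consecutive maps starting at `M_j` equals the image of the
composite of `N - p` consecutive maps ending at `M_j`; compositions extending outside the
range are zero maps, so positions `j < N - p` receive zero image. -/
def IsAcyclicN (N n : ℕ) {M : ℕ → Type*} [∀ j, AddCommGroup (M j)] [∀ j, Module K (M j)]
    (d : ∀ j, M j →ₗ[K] M (j + 1)) : Prop :=
  ∀ p, 1 ≤ p → p ≤ N - 1 →
    (∀ i, i + (N - p) ≤ n →
      LinearMap.ker (compMaps K d (i + (N - p)) p)
        = LinearMap.range (compMaps K d i (N - p))) ∧
    (∀ j, j ≤ n → j < N - p → LinearMap.ker (compMaps K d j p) = ⊥)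

end NComplex

section KoszulComplex

variable (K : Type*) [Field K] (E E' : Type*)
  [AddCommGroup E] [Module K E] [AddCommGroup E'] [Module K E']

/-- The canonical identification `V ≅ V^⊗1`. -/
noncomputable def toPow1 (V : Type*) [AddCommGroup V] [Module K V] : V ≃ₗ[K] ⨂[K]^1 V :=
  (PiTensorProduct.subsingletonEquiv (R := K) (s := fun _ : Fin 1 => V) (0 : Fin 1)).symm

/-- The differential of the Koszul-type complex with spaces `M_j = E'^⊗j ⊗ E^⊗(n-j)`: for
`j < n` it is `id_{E'}^⊗j ⊗ f ⊗ id_E^⊗(n-1-j)` (under the canonical associativity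
identifications), and it is the zero map otherwise. -/
noncomputable def dKoszul (f : E →ₗ[K] E') (n j : ℕ) :
    ((⨂[K]^j E') ⊗[K] (⨂[K]^(n - j) E)) →ₗ[K]
      ((⨂[K]^(j + 1) E') ⊗[K] (⨂[K]^(n - (j + 1)) E)) :=
  if h : j < n then
    LinearMap.rTensor (⨂[K]^(n - (j + 1)) E)
        ((TensorPower.mulEquiv (n := j) (m := 1)).toLinearMap
          ∘ₗ LinearMap.lTensor (⨂[K]^j E') (toPow1 K E').toLinearMap)
      ∘ₗ (TensorProduct.assoc K (⨂[K]^j E') E' (⨂[K]^(n - (j + 1)) E)).symm.toLinearMap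
      ∘ₗ LinearMap.lTensor (⨂[K]^j E') (LinearMap.rTensor (⨂[K]^(n - (j + 1)) E) f)
      ∘ₗ LinearMap.lTensor (⨂[K]^j E')
          ((TensorProduct.map
              (PiTensorProduct.subsingletonEquiv (0 : Fin 1)).toLinearMap
              (LinearMap.id : (⨂[K]^(n - (j + 1)) E) →ₗ[K] (⨂[K]^(n - (j + 1)) E)))
            ∘ₗ (TensorPower.mulEquiv (n := 1) (m := n - (j + 1))).symm.toLinearMap
            ∘ₗ (TensorPower.cast K E (by omega : n - j = 1 + (n - (j + 1)))).toLinearMap)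
  else 0

end KoszulComplex


section Aux

variable {K V : Type*} [Field K] [AddCommGroup V] [Module K V]

/-- A nontrivial tensor power of a subsingleton module is subsingleton. -/
lemma aux_subsingleton_pow (m : ℕ) (hm : 1 ≤ m) [Subsingleton V] :
    Subsingleton (⨂[K]^m V) := by
  have hz : ∀ x : ⨂[K]^m V, x = 0 := by
    intro x
    induction x using PiTensorProduct.induction_on with
    | smul_tprod r f =>
        have h0 : f ⟨0, hm⟩ = 0 := Subsingleton.elim _ _
        rw [(PiTensorProduct.tprod K).map_coord_zero ⟨0, hm⟩ h0, smul_zero]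
    | add x y hx hy => rw [hx, hy, add_zero]
  exact subsingleton_of_forall_eq 0 hz

/-- If a nontrivial tensor power of `V` is trivial, then `V` is trivial. -/
lemma aux_pow_trivial (m : ℕ) (hm : 1 ≤ m) (h : ∀ y : ⨂[K]^m V, y = 0) (x : V) : x = 0 := by
  rw [← Module.forall_dual_apply_eq_zero_iff K]
  intro φ
  have h0 := h (PiTensorProduct.tprod K (fun _ : Fin m => x))
  have h1 := congrArg
    (PiTensorProduct.lift ((MultilinearMap.mkPiAlgebra K (Fin m) K).compLinearMap (fun _ => φ)))
    h0
  simp only [PiTensorProduct.lift.tprod, MultilinearMap.compLinearMap_apply,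
    MultilinearMap.mkPiAlgebra_apply, Finset.prod_const, Finset.card_fin, map_zero] at h1
  exact pow_eq_zero_iff (by omega : m ≠ 0) |>.mp h1

end Aux

/-- Let `K` be a field, `N ≥ 3`, `1 ≤ n ≤ N-2`, and `f : E → E'` a linear
map between finite-dimensional `K`-vector spaces.  The `N`-complex with spaces
`M_j = E'^⊗j ⊗ E^⊗(n-j)` for `0 ≤ j ≤ n` (and `0` outside) and differentials
`id_{E'}^⊗j ⊗ f ⊗ id_E^⊗(n-1-j)` is acyclic if and only if `E = 0` and `E' = 0`. -/
theorem statement8 (K : Type*) [Field K] (N : ℕ) (hN : 3 ≤ N)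
    (n : ℕ) (hn1 : 1 ≤ n) (hn2 : n ≤ N - 2)
    (E E' : Type*) [AddCommGroup E] [Module K E] [AddCommGroup E'] [Module K E']
    [FiniteDimensional K E] [FiniteDimensional K E'] (f : E →ₗ[K] E') :
    IsAcyclicN K N n
      (M := fun j => (⨂[K]^j E') ⊗[K] (⨂[K]^(n - j) E))
      (fun j => dKoszul K E E' f n j)
    ↔ ((∀ x : E, x = 0) ∧ (∀ x : E', x = 0)) := by

  have hcomp1 : ∀ (d : ∀ j, ((⨂[K]^j E') ⊗[K] (⨂[K]^(n - j) E)) →ₗ[K]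
      ((⨂[K]^(j+1) E') ⊗[K] (⨂[K]^(n - (j+1)) E))) (j : ℕ),
      compMaps K d j 1 = (d j).comp (compMaps K d j 0) := fun _ _ => rfl
  constructor
  · intro h
    have h1 := (h 1 le_rfl (by omega)).2
    -- Step 1: M n is trivial, hence E' is trivial.
    have hMn : ∀ x : (⨂[K]^n E') ⊗[K] (⨂[K]^(n - n) E), x = 0 := by
      intro x
      have hker := h1 n le_rfl (by omega)
      have hdn : dKoszul K E E' f n n = 0 := dif_neg (by omega)
      have hx : compMaps K (fun j => dKoszul K E E' f n j) n 1 x = 0 := by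
        rw [hcomp1]
        simp [hdn]
      rw [← LinearMap.mem_ker, hker, Submodule.mem_bot] at hx
      exact hx
    haveI : IsEmpty (Fin (n - n)) := by rw [Nat.sub_self]; infer_instance
    have e : ((⨂[K]^n E') ⊗[K] (⨂[K]^(n - n) E)) ≃ₗ[K] (⨂[K]^n E') :=
      (TensorProduct.congr (LinearEquiv.refl K _)
        (PiTensorProduct.isEmptyEquiv (Fin (n - n)))).trans (TensorProduct.rid K _)
    have hE'pow : ∀ y : ⨂[K]^n E', y = 0 := by
      intro y
      have := hMn (e.symm y)
      calc y = e (e.symm y) := (e.apply_symm_apply y).symm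
        _ = e 0 := by rw [this]
        _ = 0 := map_zero _
    have hE' : ∀ x : E', x = 0 := aux_pow_trivial n hn1 hE'pow
    -- Step 2: d₀ is injective with trivial target, hence E is trivial.
    haveI : Subsingleton E' := subsingleton_of_forall_eq 0 hE'
    haveI : Subsingleton (⨂[K]^1 E') := aux_subsingleton_pow 1 le_rfl
    have hM0 : ∀ x : (⨂[K]^0 E') ⊗[K] (⨂[K]^(n - 0) E), x = 0 := by
      intro x
      have hker := h1 0 (by omega) (by omega)
      have hx : compMaps K (fun j => dKoszul K E E' f n j) 0 1 x = 0 :=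
        Subsingleton.elim _ _
      rw [← LinearMap.mem_ker, hker, Submodule.mem_bot] at hx
      exact hx
    have e0 : ((⨂[K]^0 E') ⊗[K] (⨂[K]^(n - 0) E)) ≃ₗ[K] (⨂[K]^(n - 0) E) :=
      (TensorProduct.congr (PiTensorProduct.isEmptyEquiv (Fin 0))
        (LinearEquiv.refl K _)).trans (TensorProduct.lid K _)
    have hEpow : ∀ y : ⨂[K]^(n - 0) E, y = 0 := by
      intro y
      have := hM0 (e0.symm y)
      calc y = e0 (e0.symm y) := (e0.apply_symm_apply y).symm
        _ = e0 0 := by rw [this]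
        _ = 0 := map_zero _
    exact ⟨aux_pow_trivial (n - 0) (by omega) hEpow, hE'⟩
  · rintro ⟨hE, hE'⟩
    haveI : Subsingleton E := subsingleton_of_forall_eq 0 hE
    haveI : Subsingleton E' := subsingleton_of_forall_eq 0 hE'
    haveI hM : ∀ j : ℕ, Subsingleton ((⨂[K]^j E') ⊗[K] (⨂[K]^(n - j) E)) := by
      intro j
      rcases Nat.eq_zero_or_pos j with hj | hj
      · subst hj
        haveI : Subsingleton (⨂[K]^(n - 0) E) := aux_subsingleton_pow (n - 0) (by omega)
        infer_instance
      · haveI : Subsingleton (⨂[K]^j E') := aux_subsingleton_pow j hj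
        infer_instance
    intro p hp1 hp2
    refine ⟨fun i _ => ?_, fun j _ _ => ?_⟩
    · haveI := hM (i + (N - p))
      haveI : Subsingleton (Submodule K ((⨂[K]^(i + (N - p)) E') ⊗[K]
          (⨂[K]^(n - (i + (N - p))) E))) := Submodule.subsingleton_iff K |>.mpr inferInstance
      exact Subsingleton.elim _ _
    · haveI := hM j
      haveI : Subsingleton (Submodule K ((⨂[K]^j E') ⊗[K] (⨂[K]^(n - j) E))) :=
        Submodule.subsingleton_iff K |>.mpr inferInstance
      exact Subsingleton.elim _ _
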